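/- In particular, ∫_{-1}^1 C_{l₁}^λ(t) · C_{l₂}^{λ+1}(t) · (1-t²)^{λ+1/2} dt = 0 whenever l₂ ≠ l₁ and l₂ ≠ l₁ - 2, for λ > 0. -/

import Mathlib

/-!
The contiguous relation `(λ + l) C_l^λ = λ (C_l^{λ+1} - C_{l-2}^{λ+1})` (a Gamma-function
identity coefficient by coefficient; for `l < 2` the second term is absent) turns the integral
into a combination of `∫ C_m^{λ+1} C_{l₂}^{λ+1} (1 - t²)^{λ + 1/2}` with `m ∈ {l₁, l₁ - 2}`,
and `(1 - t²)^{(λ+1) - 1/2}` is exactly the orthogonality weight of the `C^{λ+1}`.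
Orthogonality is the Sturm–Liouville argument: `C_l^μ` solves
`(1 - t²) y'' - (2μ + 1) t y' + l (l + 2μ) y = 0`, so for two solutions with distinct
eigenvalues the weighted Wronskian `(1 - t²)^{μ + 1/2} (y z' - z y')` is a primitive of a
nonzero multiple of `y z (1 - t²)^{μ - 1/2}` that vanishes at `±1`.
-/

open Real

/-- The Gegenbauer polynomial `C_l^λ(t)`, via its standard explicit formula
(equivalent to the generating-function definition
`∑ C_l^λ(t) r^l = (1 - 2tr + r²)^(-λ)`). -/
noncomputable def gegenbauer (lam : ℝ) (l : ℕ) (t : ℝ) : ℝ :=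
  ∑ k ∈ Finset.range (l / 2 + 1),
    (-1 : ℝ) ^ k * Real.Gamma (lam + l - k) /
      (Real.Gamma lam * (Nat.factorial k) * (Nat.factorial (l - 2 * k))) *
      (2 * t) ^ (l - 2 * k)

open Finset Nat

theorem integral_mul_mul_one_sub_sq_rpow_eq_zero_of_ode {μ a b : ℝ} (hμ : 1 / 2 ≤ μ)
    {y z : ℝ → ℝ} (hy : ContDiff ℝ 2 y) (hz : ContDiff ℝ 2 z)
    (hy_ode : ∀ t ∈ Set.Ioo (-1 : ℝ) 1,
      (1 - t ^ 2) * deriv (deriv y) t - (2 * μ + 1) * t * deriv y t + a * y t = 0)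
    (hz_ode : ∀ t ∈ Set.Ioo (-1 : ℝ) 1,
      (1 - t ^ 2) * deriv (deriv z) t - (2 * μ + 1) * t * deriv z t + b * z t = 0)
    (hab : a ≠ b) :
    ∫ t in (-1 : ℝ)..1, y t * z t * (1 - t ^ 2) ^ (μ - 1 / 2) = 0 := by
  have hy₀ := hy.continuous
  have hz₀ := hz.continuous
  have hy₁ := hy.continuous_deriv (by norm_num)
  have hz₁ := hz.continuous_deriv (by norm_num)
  -- The weighted Wronskian: by the two equations its derivative is `a - b` times the integrand.
  set W : ℝ → ℝ := fun t => (1 - t ^ 2) ^ (μ + 1 / 2) * (y t * deriv z t - z t * deriv y t)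
  have hW : ∀ t ∈ Set.Ioo (-1 : ℝ) 1,
      HasDerivAt W ((a - b) * (y t * z t * (1 - t ^ 2) ^ (μ - 1 / 2))) t := by
    intro t ht
    have hpos : 0 < 1 - t ^ 2 := by nlinarith [ht.1, ht.2]
    have hw : HasDerivAt (fun t : ℝ => (1 - t ^ 2) ^ (μ + 1 / 2))
        (-(2 * μ + 1) * t * (1 - t ^ 2) ^ (μ - 1 / 2)) t := by
      convert ((hasDerivAt_pow 2 t).const_sub 1).rpow_const (p := μ + 1 / 2) (Or.inl hpos.ne')
        using 1
      rw [show μ + 1 / 2 - 1 = μ - 1 / 2 by ring]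
      push_cast
      ring
    have hwronski := ((hy.differentiable (by norm_num) t).hasDerivAt.mul
      (hz.differentiable_deriv_two t).hasDerivAt).sub
      ((hz.differentiable (by norm_num) t).hasDerivAt.mul
        (hy.differentiable_deriv_two t).hasDerivAt)
    refine (hw.mul hwronski).congr_deriv ?_
    have hsplit : (1 - t ^ 2) ^ (μ + 1 / 2) = (1 - t ^ 2) * (1 - t ^ 2) ^ (μ - 1 / 2) := by
      rw [show μ + 1 / 2 = 1 + (μ - 1 / 2) by ring, rpow_add hpos, rpow_one]
    rw [hsplit, Pi.sub_apply, Pi.mul_apply, Pi.mul_apply]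
    linear_combination (1 - t ^ 2) ^ (μ - 1 / 2) * (y t * hz_ode t ht - z t * hy_ode t ht)
  have hcont : Continuous W := by fun_prop (disch := linarith)
  have hFTC := intervalIntegral.integral_eq_sub_of_hasDerivAt_of_le (by norm_num)
    hcont.continuousOn hW (Continuous.intervalIntegrable (by fun_prop (disch := linarith)) _ _)
  have hW_boundary : ∀ t : ℝ, t ^ 2 = 1 → W t = 0 := fun t ht => by
    simp only [W, ht, sub_self, zero_rpow (by linarith : μ + 1 / 2 ≠ 0), zero_mul]
  rw [hW_boundary 1 (by norm_num), hW_boundary (-1) (by norm_num), sub_zero,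
    intervalIntegral.integral_const_mul] at hFTC
  exact (mul_eq_zero.mp hFTC).resolve_left (sub_ne_zero.mpr hab)

noncomputable def gegenbauerCoeff (lam : ℝ) (l k : ℕ) : ℝ :=
  (-1 : ℝ) ^ k * Gamma (lam + l - k) / (Gamma lam * k ! * (l - 2 * k)!)

theorem gegenbauer_eq_sum (lam : ℝ) (l : ℕ) (t : ℝ) :
    gegenbauer lam l t =
      ∑ k ∈ range (l / 2 + 1), gegenbauerCoeff lam l k * (2 * t) ^ (l - 2 * k) :=
  rfl

theorem contDiff_gegenbauer (lam : ℝ) (l : ℕ) {n : WithTop ℕ∞} :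
    ContDiff ℝ n (gegenbauer lam l) := by
  unfold gegenbauer
  fun_prop

@[fun_prop]
theorem continuous_gegenbauer (lam : ℝ) (l : ℕ) : Continuous (gegenbauer lam l) :=
  (contDiff_gegenbauer lam l (n := 0)).continuous

theorem hasDerivAt_two_mul_pow (n : ℕ) (t : ℝ) :
    HasDerivAt (fun t : ℝ => (2 * t) ^ n) (2 * n * (2 * t) ^ (n - 1)) t :=
  (((hasDerivAt_id t).const_mul 2).pow n).congr_deriv (by simp only [id]; ring)

theorem hasDerivAt_two_mul_mul_two_mul_pow (n : ℕ) (t : ℝ) :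
    HasDerivAt (fun t : ℝ => 2 * n * (2 * t) ^ (n - 1))
      (4 * n * (n - 1) * (2 * t) ^ (n - 2)) t := by
  refine ((hasDerivAt_two_mul_pow (n - 1) t).const_mul (2 * n : ℝ)).congr_deriv ?_
  rcases n with _ | n
  · simp
  · rw [Nat.add_sub_cancel, show n + 1 - 2 = n - 1 by omega, Nat.cast_add, Nat.cast_one]
    ring

theorem one_sub_sq_mul_sub_mul_deriv_two_mul_pow (μ : ℝ) (n : ℕ) (t : ℝ) :
    (1 - t ^ 2) * (4 * n * (n - 1) * (2 * t) ^ (n - 2))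
        - (2 * μ + 1) * t * (2 * n * (2 * t) ^ (n - 1)) =
      4 * n * (n - 1) * (2 * t) ^ (n - 2) - n * (n + 2 * μ) * (2 * t) ^ n := by
  rcases n with _ | _ | n
  · simp
  · norm_num
    ring
  · simp only [show n + 2 - 1 = n + 1 by omega, pow_succ]
    push_cast
    ring

theorem sum_range_succ_add_eq_zero {f g : ℕ → ℝ} {N : ℕ} (hg : g 0 = 0) (hf : f N = 0)
    (hfg : ∀ k < N, f k = -g (k + 1)) :
    ∑ k ∈ range (N + 1), (f k + g k) = 0 := by
  rw [sum_range_succ, hf, zero_add,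
    sum_congr rfl fun k hk => by rw [hfg k (mem_range.mp hk), neg_add_eq_sub], sum_range_sub', hg,
    zero_sub, neg_add_cancel]

theorem gegenbauerCoeff_mul_eq_neg_mul_gegenbauerCoeff_succ {lam : ℝ} (hlam : 0 < lam)
    {l k : ℕ} (hk : k + 1 ≤ l / 2) :
    gegenbauerCoeff lam l k * (((l : ℝ) - 2 * k) * ((l : ℝ) - 2 * k - 1)) =
      -(((k : ℝ) + 1) * (lam + l - k - 1)) * gegenbauerCoeff lam l (k + 1) := by
  obtain ⟨N, rfl⟩ : ∃ N, l = N + 2 * (k + 1) := ⟨l - 2 * (k + 1), by omega⟩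
  have hGamma : Gamma (lam + (N + 2 * (k + 1) : ℕ) - k) =
      (lam + N + k + 1) * Gamma (lam + (N + 2 * (k + 1) : ℕ) - (k + 1 : ℕ)) := by
    push_cast
    rw [show lam + (N + 2 * (k + 1)) - (k + 1) = lam + N + k + 1 by ring,
      ← Gamma_add_one (by positivity)]
    ring_nf
  have hGamma_ne : Gamma lam ≠ 0 := (Gamma_pos_of_pos hlam).ne'
  unfold gegenbauerCoeff
  rw [hGamma, show N + 2 * (k + 1) - 2 * k = N + 1 + 1 by omega, Nat.add_sub_cancel,
    factorial_succ, factorial_succ, factorial_succ k, pow_succ]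
  push_cast
  field_simp
  ring

theorem gegenbauer_ode {lam : ℝ} (hlam : 0 < lam) (l : ℕ) (t : ℝ) :
    (1 - t ^ 2) * deriv (deriv (gegenbauer lam l)) t
        - (2 * lam + 1) * t * deriv (gegenbauer lam l) t
        + l * (l + 2 * lam) * gegenbauer lam l t = 0 := by
  set c := gegenbauerCoeff lam l
  set n : ℕ → ℕ := fun k => l - 2 * k
  have hderiv : deriv (gegenbauer lam l) =
      fun t => ∑ k ∈ range (l / 2 + 1), c k * (2 * n k * (2 * t) ^ (n k - 1)) :=
    funext fun t => (HasDerivAt.fun_sum fun k _ =>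
      (hasDerivAt_two_mul_pow (n k) t).const_mul (c k)).deriv
  have hderiv2 :
      deriv (fun t => ∑ k ∈ range (l / 2 + 1), c k * (2 * n k * (2 * t) ^ (n k - 1))) t =
        ∑ k ∈ range (l / 2 + 1), c k * (4 * n k * (n k - 1) * (2 * t) ^ (n k - 2)) :=
    (HasDerivAt.fun_sum fun k _ =>
      (hasDerivAt_two_mul_mul_two_mul_pow (n k) t).const_mul (c k)).deriv
  rw [hderiv, hderiv2, gegenbauer_eq_sum, mul_sum, mul_sum, mul_sum, ← sum_sub_distrib,
    ← sum_add_distrib]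
  -- On each monomial the operator leaves a two-term remainder; the coefficient recurrence
  -- makes these telescope.
  calc _ = ∑ k ∈ range (l / 2 + 1), (c k * (4 * n k * (n k - 1) * (2 * t) ^ (n k - 2))
          + c k * ((l * (l + 2 * lam) - n k * (n k + 2 * lam)) * (2 * t) ^ n k)) :=
        sum_congr rfl fun k _ => by
          linear_combination c k * one_sub_sq_mul_sub_mul_deriv_two_mul_pow lam (n k) t
    _ = 0 := by
      refine sum_range_succ_add_eq_zero (by simp [n]) ?_ fun k hk => ?_
      · rcases (by omega : l - 2 * (l / 2) = 0 ∨ l - 2 * (l / 2) = 1) with h | h <;> simp [n, h]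
      · have hexp : n k - 2 = n (k + 1) := by simp only [n]; omega
        rw [hexp]
        push_cast [n, show 2 * k ≤ l by omega, show 2 * (k + 1) ≤ l by omega]
        linear_combination 4 * (2 * t) ^ n (k + 1) *
          gegenbauerCoeff_mul_eq_neg_mul_gegenbauerCoeff_succ hlam hk

theorem add_mul_gegenbauerCoeff_zero {lam : ℝ} (hlam : 0 < lam) (l : ℕ) :
    (lam + l) * gegenbauerCoeff lam l 0 = lam * gegenbauerCoeff (lam + 1) l 0 := by
  have hGamma_ne : Gamma lam ≠ 0 := (Gamma_pos_of_pos hlam).ne'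
  unfold gegenbauerCoeff
  rw [Gamma_add_one hlam.ne', show lam + 1 + l - (0 : ℕ) = (lam + l) + 1 by push_cast; ring,
    Gamma_add_one (by positivity)]
  field_simp
  simp

theorem add_mul_gegenbauerCoeff_add_two_succ {lam : ℝ} (hlam : 0 < lam) {l k : ℕ}
    (hk : k ≤ l) :
    (lam + (l + 2 : ℕ)) * gegenbauerCoeff lam (l + 2) (k + 1) =
      lam * (gegenbauerCoeff (lam + 1) (l + 2) (k + 1) - gegenbauerCoeff (lam + 1) l k) := by
  obtain ⟨N, rfl⟩ : ∃ N, l = N + k := ⟨l - k, by omega⟩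
  have hGamma_ne : Gamma lam ≠ 0 := (Gamma_pos_of_pos hlam).ne'
  have hGamma : Gamma (lam + 1 + (N + k + 2 : ℕ) - (k + 1 : ℕ)) =
      (lam + N + 1) * Gamma (lam + (N + k + 2 : ℕ) - (k + 1 : ℕ)) := by
    push_cast
    rw [show lam + 1 + (N + k + 2) - (k + 1) = (lam + N + 1) + 1 by ring,
      show lam + (N + k + 2) - (k + 1) = lam + N + 1 by ring, Gamma_add_one (by positivity)]
  have hGamma' :
      Gamma (lam + 1 + (N + k : ℕ) - k) = Gamma (lam + (N + k + 2 : ℕ) - (k + 1 : ℕ)) := by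
    push_cast
    ring_nf
  unfold gegenbauerCoeff
  rw [hGamma, hGamma', Gamma_add_one hlam.ne',
    show N + k + 2 - 2 * (k + 1) = N + k - 2 * k by omega, factorial_succ k, pow_succ]
  push_cast
  field_simp
  ring

theorem add_mul_gegenbauer_add_two {lam : ℝ} (hlam : 0 < lam) (l : ℕ) (t : ℝ) :
    (lam + (l + 2 : ℕ)) * gegenbauer lam (l + 2) t =
      lam * (gegenbauer (lam + 1) (l + 2) t - gegenbauer (lam + 1) l t) := by
  simp only [gegenbauer_eq_sum, show (l + 2) / 2 + 1 = l / 2 + 1 + 1 by omega]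
  rw [sum_range_succ', sum_range_succ' _ (l / 2 + 1), add_sub_right_comm, ← sum_sub_distrib,
    mul_add, mul_add, mul_sum, mul_sum]
  congr 1
  · refine sum_congr rfl fun k hk => ?_
    rw [show l + 2 - 2 * (k + 1) = l - 2 * k by omega]
    linear_combination (2 * t) ^ (l - 2 * k) *
      add_mul_gegenbauerCoeff_add_two_succ hlam (l := l) (k := k)
        (by have := mem_range.mp hk; omega)
  · linear_combination (2 * t) ^ (l + 2 - 2 * 0) * add_mul_gegenbauerCoeff_zero hlam (l + 2)

theorem add_mul_gegenbauer_of_lt_two {lam : ℝ} (hlam : 0 < lam) {l : ℕ} (hl : l < 2) (t : ℝ) :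
    (lam + l) * gegenbauer lam l t = lam * gegenbauer (lam + 1) l t := by
  simp only [gegenbauer_eq_sum, show l / 2 = 0 by omega, zero_add, sum_range_one]
  linear_combination (2 * t) ^ (l - 2 * 0) * add_mul_gegenbauerCoeff_zero hlam l

theorem integral_gegenbauer_mul_gegenbauer_mul_rpow_eq_zero {lam : ℝ} (hlam : 1 / 2 ≤ lam)
    {m n : ℕ} (hmn : m ≠ n) :
    ∫ t in (-1 : ℝ)..1, gegenbauer lam m t * gegenbauer lam n t * (1 - t ^ 2) ^ (lam - 1 / 2) =
      0 := by
  have hlam₀ : 0 < lam := by linarith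
  refine integral_mul_mul_one_sub_sq_rpow_eq_zero_of_ode hlam (contDiff_gegenbauer lam m)
    (contDiff_gegenbauer lam n) (fun t _ => gegenbauer_ode hlam₀ m t)
    (fun t _ => gegenbauer_ode hlam₀ n t) fun h => hmn ?_
  have hsum : (0 : ℝ) < m + n + 2 * lam := by positivity
  have : ((m : ℝ) - n) * (m + n + 2 * lam) = 0 := by linear_combination h
  exact_mod_cast sub_eq_zero.mp ((mul_eq_zero.mp this).resolve_right hsum.ne')

theorem gegenbauer_mixed_order_integral_vanishes (lam : ℝ) (hlam : 0 < lam)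
    (l₁ l₂ : ℕ) (h₁ : l₂ ≠ l₁) (h₂ : l₂ + 2 ≠ l₁) :
    ∫ t in (-1 : ℝ)..1,
        gegenbauer lam l₁ t * gegenbauer (lam + 1) l₂ t * (1 - t ^ 2) ^ (lam + 1 / 2 : ℝ) =
      0 := by
  simp_rw [mul_assoc]
  set g : ℝ → ℝ := fun t => gegenbauer (lam + 1) l₂ t * (1 - t ^ 2) ^ (lam + 1 / 2 : ℝ)
  have horth : ∀ m ≠ l₂, ∫ t in (-1 : ℝ)..1, lam * (gegenbauer (lam + 1) m t * g t) = 0 := by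
    intro m hm
    have := integral_gegenbauer_mul_gegenbauer_mul_rpow_eq_zero (by linarith : 1 / 2 ≤ lam + 1) hm
    rw [show lam + 1 - 1 / 2 = lam + 1 / 2 by ring] at this
    rw [intervalIntegral.integral_const_mul]
    simp only [g, ← mul_assoc, this, mul_zero]
  have hint : ∀ m, IntervalIntegrable (fun t => lam * (gegenbauer (lam + 1) m t * g t))
      MeasureTheory.volume (-1) 1 := fun m =>
    Continuous.intervalIntegrable (by fun_prop (disch := linarith)) _ _
  suffices (lam + l₁) * ∫ t in (-1 : ℝ)..1, gegenbauer lam l₁ t * g t = 0 from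
    (mul_eq_zero.mp this).resolve_left (by positivity)
  rw [← intervalIntegral.integral_const_mul]
  obtain hl | ⟨l, rfl⟩ : l₁ < 2 ∨ ∃ l, l₁ = l + 2 :=
    (Nat.lt_or_ge l₁ 2).imp_right fun h => ⟨l₁ - 2, by omega⟩
  · simp_rw [← mul_assoc, add_mul_gegenbauer_of_lt_two hlam hl, mul_assoc]
    exact horth l₁ h₁.symm
  · simp_rw [← mul_assoc, add_mul_gegenbauer_add_two hlam, mul_sub, sub_mul, mul_assoc]
    rw [intervalIntegral.integral_sub (hint _) (hint _), horth _ h₁.symm, horth _ (by omega),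
      sub_zero]
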